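/- arXiv:2411.19098 — 3 statements merged into one kernel-verified Lean document; each statement's English description precedes it below -/
import Mathlib

section
/- Let φ : V → ℝ be a potential vector on the vertices of a finite directed graph, and let d : V → ℝ be a demand with Σ_v d(v) = 0. Suppose M > 0 satisfies |φ(v)| < M for all v. Then Σ_v d(v)·φ(v) = ∫_{-M}^{M} Δ(V_{>x}) dx, where V_{>x} = {v : φ(v) > x} and Δ(S) = Σ_{v ∈ S} d(v). -/
open MeasureTheory

lemma ite_lt_eq_indicator_Iio (c r : ℝ) :
    (fun x : ℝ => if x < c then r else 0) = (Set.Iio c).indicator (fun _ => r) := by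
  funext x
  simp only [Set.indicator, Set.mem_Iio]

lemma intervalIntegrable_ite_lt (c r : ℝ) (a b : ℝ) :
    IntervalIntegrable (fun x : ℝ => if x < c then r else 0) volume a b := by
  rw [ite_lt_eq_indicator_Iio, intervalIntegrable_iff]
  exact (integrableOn_const measure_Ioc_lt_top.ne).indicator measurableSet_Iio

lemma intervalIntegral_ite_lt {a b c : ℝ} (r : ℝ) (hac : a ≤ c) (hcb : c ≤ b) :
    ∫ x in a..b, (if x < c then r else 0) = r * (c - a) := by
  have hIoc : Set.Ioc a b ∩ Set.Iio c = Set.Ioo a c := by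
    ext x
    simp only [Set.mem_inter_iff, Set.mem_Ioc, Set.mem_Iio, Set.mem_Ioo]
    constructor
    · rintro ⟨⟨hax, -⟩, hxc⟩
      exact ⟨hax, hxc⟩
    · rintro ⟨hax, hxc⟩
      exact ⟨⟨hax, by linarith⟩, hxc⟩
  rw [intervalIntegral.integral_of_le (hac.trans hcb), ite_lt_eq_indicator_Iio,
    setIntegral_indicator measurableSet_Iio, hIoc, setIntegral_const, measureReal_def,
    Real.volume_Ioo, ENNReal.toReal_ofReal (sub_nonneg.2 hac), smul_eq_mul, mul_comm]

-- Layer-cake: `φ v + M = ∫_{-M}^{M} 1[x < φ v] dx`, and the `M`-terms cancel since `∑ d = 0`.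
theorem stmt_1_general {V : Type*} [Fintype V] (d φ : V → ℝ) (M : ℝ)
    (hd : ∑ v, d v = 0) (hφ : ∀ v, |φ v| < M) :
    ∑ v, d v * φ v =
      ∫ x in (-M)..M, ∑ v ∈ Finset.univ.filter (fun v => x < φ v), d v := by
  have hvertex : ∀ v, ∫ x in (-M)..M, (if x < φ v then d v else 0) = d v * (φ v + M) := by
    intro v
    obtain ⟨hlo, hhi⟩ := abs_lt.1 (hφ v)
    rw [intervalIntegral_ite_lt (d v) hlo.le hhi.le, sub_neg_eq_add]
  simp_rw [Finset.sum_filter]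
  rw [intervalIntegral.integral_finsetSum fun v _ => intervalIntegrable_ite_lt (φ v) (d v) _ _]
  simp_rw [hvertex, mul_add, Finset.sum_add_distrib, ← Finset.sum_mul, hd, zero_mul, add_zero]

/-- Coarea identity for demands and potentials. -/
theorem stmt_1 {V : Type*} [Fintype V] (d φ : V → ℝ) (M : ℝ) (hM : 0 < M)
    (hd : ∑ v, d v = 0) (hφ : ∀ v, |φ v| < M) :
    ∑ v, d v * φ v =
      ∫ x in (-M)..M, ∑ v ∈ Finset.univ.filter (fun v => x < φ v), d v :=
  stmt_1_general d φ M hd hφ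
end

section
/- Let G be a finite directed graph with nonnegative capacities c, and φ : V → ℝ a potential with |φ(v)| < M for all v. Then Σ_{(u,v) ∈ E} c(u,v)·max(0, φ(u) − φ(v)) = ∫_{-M}^{M} c(∂⁺V_{>x}) dx, where V_{>x} = {v : φ(v) > x} and c(∂⁺S) is the capacity of the directed cut out of S. -/
/-!
Write the cut capacity at level `x` as `∑ u, ∑ v, c u v · 𝟙[φ v ≤ x < φ u]`: the arc `(u, v)`
crosses the cut out of `V_{>x}` exactly when `x ∈ [φ v, φ u)`. Integrating each indicator over
`(-M, M)`, which contains that interval, gives `c u v · max 0 (φ u - φ v)`.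
-/

open MeasureTheory

theorem intervalIntegrable_indicator_Ico_const (a b C lo hi : ℝ) :
    IntervalIntegrable ((Set.Ico a b).indicator fun _ => C) volume lo hi :=
  ((integrable_indicator_iff measurableSet_Ico).2
    (integrableOn_const measure_Ico_lt_top.ne)).intervalIntegrable

theorem integral_indicator_Ico_const {a b lo hi : ℝ} (C : ℝ) (ha : lo < a) (hb : b ≤ hi) :
    ∫ x in lo..hi, (Set.Ico a b).indicator (fun _ => C) x = C * max 0 (b - a) := by
  rcases le_or_gt b a with hba | hab
  · simp [Set.Ico_eq_empty (not_lt.mpr hba), max_eq_left (sub_nonpos.mpr hba)]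
  have hsub : Set.Ico a b ⊆ Set.Ioc lo hi := fun x hx =>
    ⟨ha.trans_le hx.1, hx.2.le.trans hb⟩
  rw [intervalIntegral.integral_of_le (ha.trans hab |>.le.trans hb),
    setIntegral_indicator measurableSet_Ico, Set.inter_eq_right.mpr hsub, setIntegral_const,
    Real.volume_real_Ico_of_le hab.le, smul_eq_mul, max_eq_right (sub_nonneg.mpr hab.le),
    mul_comm]

theorem sum_filter_lt_sum_filter_not_lt_eq_sum_indicator {V : Type*} [Fintype V]
    (c : V → V → ℝ) (φ : V → ℝ) (x : ℝ) :
    ∑ u ∈ Finset.univ.filter (fun u => x < φ u),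
        ∑ v ∈ Finset.univ.filter (fun v => ¬ x < φ v), c u v =
      ∑ u, ∑ v, (Set.Ico (φ v) (φ u)).indicator (fun _ => c u v) x := by
  simp only [Finset.sum_filter, Set.indicator_apply, Set.mem_Ico, not_lt]
  refine Finset.sum_congr rfl fun u _ => ?_
  split_ifs with hu <;> simp [hu]

theorem stmt_2_general {V : Type*} [Fintype V] (c : V → V → ℝ)
    (φ : V → ℝ) (M : ℝ) (hM : ∀ v, |φ v| < M) :
    ∑ u, ∑ v, c u v * max 0 (φ u - φ v) =
      ∫ x in (-M)..M,
        ∑ u ∈ Finset.univ.filter (fun u => x < φ u),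
          ∑ v ∈ Finset.univ.filter (fun v => ¬ x < φ v), c u v := by
  have hint : ∀ u v, IntervalIntegrable ((Set.Ico (φ v) (φ u)).indicator fun _ => c u v)
      volume (-M) M := fun u v => intervalIntegrable_indicator_Ico_const _ _ _ _ _
  simp_rw [sum_filter_lt_sum_filter_not_lt_eq_sum_indicator]
  rw [intervalIntegral.integral_finsetSum fun u _ => by
    simpa only [← Finset.sum_fn] using IntervalIntegrable.sum _ fun v _ => hint u v]
  refine Finset.sum_congr rfl fun u _ => ?_
  rw [intervalIntegral.integral_finsetSum fun v _ => hint u v]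
  exact Finset.sum_congr rfl fun v _ =>
    (integral_indicator_Ico_const _ (neg_lt_of_abs_lt (hM v)) (lt_of_abs_lt (hM u)).le).symm

/-- Coarea identity for directed cut capacities under a potential. -/
theorem stmt_2 {V : Type*} [Fintype V] (c : V → V → ℝ) (hc : ∀ u v, 0 ≤ c u v)
    (φ : V → ℝ) (M : ℝ) (hM : ∀ v, |φ v| < M) :
    ∑ u, ∑ v, c u v * max 0 (φ u - φ v) =
      ∫ x in (-M)..M,
        ∑ u ∈ Finset.univ.filter (fun u => x < φ u),
          ∑ v ∈ Finset.univ.filter (fun v => ¬ x < φ v), c u v :=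
  stmt_2_general c φ M hM
end

section
/- Let G be a finite directed graph with nonnegative capacities, d a demand (summing to zero), and φ : V → ℝ a potential such that Σ_v φ(v)·d(v) > Σ_{(u,v) ∈ E} c(u,v)·max(0, φ(u) − φ(v)). Then there exists a threshold x such that the superlevel set S = V_{>x} satisfies Δ(S) > c(∂⁺S), i.e., the demand into S exceeds the directed cut capacity out of S. -/
/-- Threshold cut existence from a potential certificate. -/
theorem stmt_3 {V : Type*} [Fintype V] (c : V → V → ℝ) (hc : ∀ u v, 0 ≤ c u v)
    (d φ : V → ℝ) (hd : ∑ v, d v = 0)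
    (hcert : ∑ v, φ v * d v > ∑ u, ∑ v, c u v * max 0 (φ u - φ v)) :
    ∃ x : ℝ,
      (∑ v ∈ Finset.univ.filter (fun v => x < φ v), d v) >
        ∑ u ∈ Finset.univ.filter (fun u => x < φ u),
          ∑ v ∈ Finset.univ.filter (fun v => ¬ x < φ v), c u v := by
  classical
  rcases isEmpty_or_nonempty V with hV | hV
  · exfalso; simp at hcert
  by_contra hcon
  push_neg at hcon
  set s : Finset ℝ := Finset.image φ Finset.univ with hs
  have hsne : s.Nonempty := Finset.Nonempty.image Finset.univ_nonempty φ
  set k := s.card with hk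
  have hk1 : 1 ≤ k := Finset.card_pos.mpr hsne
  let e := s.orderIsoOfFin rfl
  set Y : ℕ → ℝ := fun i => if h : i < k then (e ⟨i, h⟩ : ℝ) else 0 with hYdef
  have hY : ∀ {i j : ℕ} (hi : i < k) (hj : j < k), (Y i < Y j ↔ i < j) := by
    intro i j hi hj
    simp only [hYdef, dif_pos hi, dif_pos hj]
    rw [Subtype.coe_lt_coe, e.lt_iff_lt]
    exact Fin.mk_lt_mk
  have hmono : ∀ i ∈ Finset.range (k - 1), Y i ≤ Y (i + 1) := by
    intro i hi
    rw [Finset.mem_range] at hi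
    have hi1 : i < k := by omega
    have hi2 : i + 1 < k := by omega
    have := (hY hi1 hi2).mpr (Nat.lt_succ_self i)
    linarith
  have key : ∀ t ∈ s, ∑ i ∈ Finset.range (k - 1),
      (Y (i + 1) - Y i) * (if Y i < t then (1:ℝ) else 0) = t - Y 0 := by
    intro t ht
    set j : Fin k := e.symm ⟨t, ht⟩ with hj
    have hYj : Y (j : ℕ) = t := by
      simp only [hYdef, dif_pos j.isLt]
      have : e ⟨(j : ℕ), j.isLt⟩ = e j := by congr 1
      rw [this, hj, e.apply_symm_apply]
    have hjk : (j : ℕ) < k := j.isLt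
    have step : ∀ i ∈ Finset.range (k - 1),
        (Y (i + 1) - Y i) * (if Y i < t then (1:ℝ) else 0)
          = if i < (j : ℕ) then Y (i + 1) - Y i else 0 := by
      intro i hi
      rw [Finset.mem_range] at hi
      have hi1 : i < k := by omega
      have : Y i < t ↔ i < (j : ℕ) := by rw [← hYj]; exact hY hi1 hjk
      by_cases h : i < (j : ℕ)
      · rw [if_pos (this.mpr h), if_pos h, mul_one]
      · rw [if_neg (fun hh => h (this.mp hh)), if_neg h, mul_zero]
    rw [Finset.sum_congr rfl step, ← Finset.sum_filter]
    have hfil : (Finset.range (k - 1)).filter (fun i => i < (j : ℕ)) = Finset.range (j : ℕ) := by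
      ext i
      simp only [Finset.mem_filter, Finset.mem_range]
      omega
    rw [hfil, Finset.sum_range_sub (fun i => Y i) (j : ℕ), hYj]
  have key2 : ∀ a ∈ s, ∀ b ∈ s, ∑ i ∈ Finset.range (k - 1),
      (Y (i + 1) - Y i) * ((if Y i < b then (1:ℝ) else 0) * (if Y i < a then (0:ℝ) else 1))
        = max 0 (b - a) := by
    intro a ha b hb
    rcases le_total a b with hab | hab
    · have : ∀ i ∈ Finset.range (k - 1),
          (Y (i + 1) - Y i) * ((if Y i < b then (1:ℝ) else 0) * (if Y i < a then (0:ℝ) else 1))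
            = (Y (i + 1) - Y i) * (if Y i < b then (1:ℝ) else 0)
              - (Y (i + 1) - Y i) * (if Y i < a then (1:ℝ) else 0) := by
        intro i _
        by_cases h1 : Y i < a
        · simp only [if_pos h1, if_pos (lt_of_lt_of_le h1 hab)]; ring
        · simp only [if_neg h1]
          by_cases h2 : Y i < b
          · simp only [if_pos h2]; ring
          · simp only [if_neg h2]; ring
      rw [Finset.sum_congr rfl this, Finset.sum_sub_distrib, key b hb, key a ha]
      rw [max_eq_right (by linarith)]
      ring
    · have hmax : max 0 (b - a) = 0 := max_eq_left (by linarith)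
      rw [hmax]
      apply Finset.sum_eq_zero
      intro i _
      by_cases h1 : Y i < b
      · simp only [if_pos h1, if_pos (lt_of_lt_of_le h1 hab)]; ring
      · simp only [if_neg h1]; ring
  -- Left side decomposition
  have E1 : ∑ v, φ v * d v = ∑ i ∈ Finset.range (k - 1),
      (Y (i + 1) - Y i) * (∑ v, (if Y i < φ v then (1:ℝ) else 0) * d v) := by
    have h1 : ∑ v, φ v * d v = ∑ v, (φ v - Y 0) * d v := by
      have : ∑ v, (φ v - Y 0) * d v = ∑ v, φ v * d v - Y 0 * ∑ v, d v := by
        rw [Finset.mul_sum, ← Finset.sum_sub_distrib]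
        exact Finset.sum_congr rfl (fun v _ => by ring)
      rw [this, hd, mul_zero, sub_zero]
    rw [h1]
    have h2 : ∀ v : V, (φ v - Y 0) * d v = ∑ i ∈ Finset.range (k - 1),
        (Y (i + 1) - Y i) * ((if Y i < φ v then (1:ℝ) else 0) * d v) := by
      intro v
      have := key (φ v) (Finset.mem_image_of_mem φ (Finset.mem_univ v))
      rw [← this, Finset.sum_mul]
      exact Finset.sum_congr rfl (fun i _ => by ring)
    rw [Finset.sum_congr rfl (fun v _ => h2 v), Finset.sum_comm]
    exact Finset.sum_congr rfl (fun i _ => by rw [Finset.mul_sum])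
  -- Right side decomposition
  have E2 : ∑ u, ∑ v, c u v * max 0 (φ u - φ v) = ∑ i ∈ Finset.range (k - 1),
      (Y (i + 1) - Y i) * (∑ u, ∑ v,
        (if Y i < φ u then (1:ℝ) else 0) * ((if Y i < φ v then (0:ℝ) else 1) * c u v)) := by
    have h2 : ∀ u v : V, c u v * max 0 (φ u - φ v) = ∑ i ∈ Finset.range (k - 1),
        (Y (i + 1) - Y i) * ((if Y i < φ u then (1:ℝ) else 0) *
          ((if Y i < φ v then (0:ℝ) else 1) * c u v)) := by
      intro u v
      have := key2 (φ v) (Finset.mem_image_of_mem φ (Finset.mem_univ v))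
        (φ u) (Finset.mem_image_of_mem φ (Finset.mem_univ u))
      rw [← this, Finset.mul_sum]
      exact Finset.sum_congr rfl (fun i _ => by ring)
    calc ∑ u, ∑ v, c u v * max 0 (φ u - φ v)
        = ∑ u, ∑ v, ∑ i ∈ Finset.range (k - 1),
            (Y (i + 1) - Y i) * ((if Y i < φ u then (1:ℝ) else 0) *
              ((if Y i < φ v then (0:ℝ) else 1) * c u v)) :=
          Finset.sum_congr rfl (fun u _ => Finset.sum_congr rfl (fun v _ => h2 u v))
      _ = ∑ u, ∑ i ∈ Finset.range (k - 1), ∑ v,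
            (Y (i + 1) - Y i) * ((if Y i < φ u then (1:ℝ) else 0) *
              ((if Y i < φ v then (0:ℝ) else 1) * c u v)) :=
          Finset.sum_congr rfl (fun u _ => Finset.sum_comm)
      _ = ∑ i ∈ Finset.range (k - 1), ∑ u, ∑ v,
            (Y (i + 1) - Y i) * ((if Y i < φ u then (1:ℝ) else 0) *
              ((if Y i < φ v then (0:ℝ) else 1) * c u v)) := Finset.sum_comm
      _ = ∑ i ∈ Finset.range (k - 1),
            (Y (i + 1) - Y i) * (∑ u, ∑ v,
              (if Y i < φ u then (1:ℝ) else 0) * ((if Y i < φ v then (0:ℝ) else 1) * c u v)) := by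
          refine Finset.sum_congr rfl (fun i _ => ?_)
          rw [Finset.mul_sum]
          refine Finset.sum_congr rfl (fun u _ => ?_)
          rw [Finset.mul_sum]
  -- Convert hcon to indicator form and conclude
  have hle : ∀ x : ℝ, ∑ v, (if x < φ v then (1:ℝ) else 0) * d v
      ≤ ∑ u, ∑ v, (if x < φ u then (1:ℝ) else 0) * ((if x < φ v then (0:ℝ) else 1) * c u v) := by
    intro x
    have h := hcon x
    have hL : ∑ v ∈ Finset.univ.filter (fun v => x < φ v), d v
        = ∑ v, (if x < φ v then (1:ℝ) else 0) * d v := by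
      rw [Finset.sum_filter]
      exact Finset.sum_congr rfl (fun v _ => by by_cases hv : x < φ v <;> simp [hv])
    have hR : ∑ u ∈ Finset.univ.filter (fun u => x < φ u),
          ∑ v ∈ Finset.univ.filter (fun v => φ v ≤ x), c u v
        = ∑ u, ∑ v, (if x < φ u then (1:ℝ) else 0) * ((if x < φ v then (0:ℝ) else 1) * c u v) := by
      rw [Finset.sum_filter]
      refine Finset.sum_congr rfl (fun u _ => ?_)
      by_cases h1 : x < φ u
      · rw [if_pos h1, Finset.sum_filter]
        refine Finset.sum_congr rfl (fun v _ => ?_)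
        by_cases h2 : x < φ v
        · rw [if_neg (not_le.mpr h2), if_pos h1, if_pos h2]; ring
        · rw [if_pos (not_lt.mp h2), if_pos h1, if_neg h2]; ring
      · rw [if_neg h1]
        symm
        apply Finset.sum_eq_zero
        intro v _
        rw [if_neg h1]; ring
    rw [← hL, ← hR]
    exact h
  have hfinal : ∑ v, φ v * d v ≤ ∑ u, ∑ v, c u v * max 0 (φ u - φ v) := by
    rw [E1, E2]
    apply Finset.sum_le_sum
    intro i hi
    have hg : 0 ≤ Y (i + 1) - Y i := by linarith [hmono i hi]
    exact mul_le_mul_of_nonneg_left (hle (Y i)) hg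
  linarith
end
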